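/- Let f be a nonnegative k-submodular function with f(0) = 0, let s = s^n be the output of an RLA run with threshold τ ≥ 0, and let o be a k-set with c(o) ≤ B. If no element e ∈ supp(o) \ supp(s) satisfies both Δ_{(e, o(e))}f(s^{<e}) ≥ c(e)·τ and c(s^{<e}) + c(e) > B, then f(o) ≤ 3·f(s) + c(o)·τ. -/

import Mathlib

/-!
Let `o_j` agree with the output `s = s^n` on the first `j` processed elements and with `o`
on the others (`hybrid`), so that `o_0 = o` and `o_n = s`. Passing from `o_j` to `o_{j+1}`
only changes the position of `e_j`, and `s^j ⊑ o_j` away from `e_j`. Orthant submodularity and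
pairwise monotonicity, compared against the greedy position at `s^j`, bound the loss
`f(o_j) - f(o_{j+1})` by twice the gain `f(s^{j+1}) - f(s^j)` when `e_j` is accepted; when it
is rejected the loss is at most the gain of `(e_j, o(e_j))` at `s^j`, which the hypothesis on
budget-blocked elements keeps below `c(e_j)·τ`. Telescoping gives `f(o) - f(s) ≤ 2 f(s) + c(o)·τ`.
-/

/-- The meet `x ⊓ y` of two `k`-sets, with components `Xᵢ ∩ Yᵢ`. -/
def sqcap {V : Type*} (x y : V → ℕ) : V → ℕ :=
  fun e => if x e = y e then x e else 0

/-- The join `x ⊔ y` of two `k`-sets, with components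
`Zᵢ = (Xᵢ ∪ Yᵢ) \ ⋃_{j ≠ i} (Xⱼ ∪ Yⱼ)`. -/
def sqcup {V : Type*} (x y : V → ℕ) : V → ℕ :=
  fun e =>
    if x e = 0 then y e
    else if y e = 0 then x e
    else if x e = y e then x e else 0

/-- A `k`-set: every element gets a position in `{0, 1, …, k}`
(`0` meaning unselected). -/
def IsKSet {V : Type*} (k : ℕ) (x : V → ℕ) : Prop := ∀ e, x e ≤ k

/-- `x ⊑ y`: every component of `x` is contained in the corresponding
component of `y`. -/
def KLE {V : Type*} (x y : V → ℕ) : Prop := ∀ e, x e ≠ 0 → y e = x e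

/-- The singleton `k`-set `(e, i)`. -/
def singl {V : Type*} [DecidableEq V] (e : V) (i : ℕ) : V → ℕ :=
  fun e' => if e' = e then i else 0

/-- `k`-submodularity: `f x + f y ≥ f (x ⊓ y) + f (x ⊔ y)` for all `k`-sets. -/
def KSubmodular {V : Type*} (k : ℕ) (f : (V → ℕ) → ℝ) : Prop :=
  ∀ x y : V → ℕ, IsKSet k x → IsKSet k y →
    f x + f y ≥ f (sqcap x y) + f (sqcup x y)

/-- The marginal gain `Δ_{(e,i)} f(x) = f (x ⊔ (e,i)) - f x`. -/
def marg {V : Type*} [DecidableEq V] (f : (V → ℕ) → ℝ) (e : V) (i : ℕ)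
    (x : V → ℕ) : ℝ :=
  f (sqcup x (singl e i)) - f x

/-- The cost of a `k`-set: the total cost of its support. -/
noncomputable def cost {V : Type*} [Fintype V] (c : V → ℝ) (x : V → ℕ) : ℝ :=
  ∑ e ∈ Finset.univ.filter (fun e => x e ≠ 0), c e

open Finset Function

section KSet

variable {V : Type*} {k : ℕ} {f : (V → ℕ) → ℝ} {x y : V → ℕ} {u : V}

lemma KLE.apply_eq_zero (hxy : KLE x y) (hyu : y u = 0) : x u = 0 := by
  by_contra hxu
  exact hxu (by rw [← hxy u hxu, hyu])

variable [DecidableEq V]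

lemma sqcup_singl_eq_update (hxu : x u = 0) (i : ℕ) :
    sqcup x (singl u i) = update x u i := by
  funext v
  by_cases hv : v = u
  · subst hv; simp [sqcup, singl, hxu]
  · simp only [sqcup, singl, if_neg hv, update_of_ne hv]
    split_ifs <;> simp_all

lemma marg_eq_of_eq_zero (hxu : x u = 0) (i : ℕ) :
    marg f u i x = f (update x u i) - f x := by
  rw [marg, sqcup_singl_eq_update hxu]

lemma IsKSet.update {i : ℕ} (hx : IsKSet k x) (u : V) (hik : i ≤ k) :
    IsKSet k (update x u i) := by
  intro v
  by_cases hv : v = u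
  · subst hv; simpa using hik
  · simpa [update_of_ne hv] using hx v

theorem KSubmodular.pairwise_monotone (hsub : KSubmodular k f) (hx : IsKSet k x)
    (hxu : x u = 0) {i j : ℕ} (hi : 1 ≤ i) (hik : i ≤ k) (hj : 1 ≤ j) (hjk : j ≤ k)
    (hij : i ≠ j) :
    2 * f x ≤ f (update x u i) + f (update x u j) := by
  have hcap : sqcap (update x u i) (update x u j) = x := by
    funext v
    by_cases hv : v = u
    · subst hv; simp [sqcap, hij, hxu]
    · simp [sqcap, hv]
  have hcup : sqcup (update x u i) (update x u j) = x := by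
    funext v
    by_cases hv : v = u
    · subst hv
      simp [sqcup, hij, hxu, Nat.one_le_iff_ne_zero.mp hi, Nat.one_le_iff_ne_zero.mp hj]
    · simp only [sqcup, update_of_ne hv]
      split_ifs <;> simp_all
  have := hsub _ _ (hx.update u hik) (hx.update u hjk)
  rw [hcap, hcup] at this
  linarith

theorem KSubmodular.orthant_submodular (hsub : KSubmodular k f) (hx : IsKSet k x)
    (hy : IsKSet k y) (hxy : KLE x y) (hyu : y u = 0) {i : ℕ} (hi : 1 ≤ i) (hik : i ≤ k) :
    f (update y u i) - f y ≤ f (update x u i) - f x := by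
  have hxu := hxy.apply_eq_zero hyu
  have hcap : sqcap (update x u i) y = x := by
    funext v
    by_cases hv : v = u
    · subst hv; simp [sqcap, hxu, hyu]
    · by_cases hxv : x v = 0
      · simp [sqcap, hv, hxv]
      · simp [sqcap, hv, hxy v hxv]
  have hcup : sqcup (update x u i) y = update y u i := by
    funext v
    by_cases hv : v = u
    · subst hv; simp [sqcup, hyu]; omega
    · by_cases hxv : x v = 0
      · simp [sqcup, hv, hxv]
      · simp [sqcup, hv, hxv, hxy v hxv]
  have := hsub _ _ (hx.update u hik) hy
  rw [hcap, hcup] at this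
  linarith

theorem KSubmodular.update_sub_update_le (hk : 2 ≤ k) (hsub : KSubmodular k f)
    (hx : IsKSet k x) (hy : IsKSet k y) (hxy : KLE x y) (hyu : y u = 0) {p i : ℕ}
    (hp : 1 ≤ p) (hpk : p ≤ k)
    (hgreedy : ∀ l, 1 ≤ l → l ≤ k → f (update x u l) ≤ f (update x u p))
    (hgain : f x ≤ f (update x u p)) (hik : i ≤ k) :
    f (update y u i) - f (update y u p) ≤ 2 * (f (update x u p) - f x) := by
  obtain ⟨l, hl, hlk, hlp⟩ : ∃ l, 1 ≤ l ∧ l ≤ k ∧ l ≠ p :=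
    if h : p = 1 then ⟨2, by omega, hk, by omega⟩ else ⟨1, le_rfl, by omega, Ne.symm h⟩
  have hloss : f y - f (update y u p) ≤ f (update x u p) - f x := by
    have := hsub.pairwise_monotone hy hyu hp hpk hl hlk hlp.symm
    have := hsub.orthant_submodular hx hy hxy hyu hl hlk
    have := hgreedy l hl hlk
    linarith
  have hgain_i : f (update y u i) - f y ≤ f (update x u p) - f x := by
    rcases Nat.eq_zero_or_pos i with rfl | hi
    · rw [update_eq_self_iff.2 hyu.symm]; linarith
    · have := hsub.orthant_submodular hx hy hxy hyu hi hik
      have := hgreedy i hi hik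
      linarith
  linarith

end KSet

section Run

variable {V : Type*} [DecidableEq V]

def hybrid (e : ℕ → V) (x y : V → ℕ) (j : ℕ) : V → ℕ :=
  ((range j).image e).piecewise x y

lemma hybrid_zero (e : ℕ → V) (x y : V → ℕ) : hybrid e x y 0 = y := by
  ext v
  simp [hybrid, piecewise]

lemma hybrid_succ (e : ℕ → V) (x y : V → ℕ) (j : ℕ) :
    hybrid e x y (j + 1) = update (hybrid e x y j) (e j) (x (e j)) := by
  ext v
  by_cases hv : v = e j
  · simp only [hybrid, piecewise, hv, update_self]
    rw [if_pos (mem_image_of_mem e (self_mem_range_succ j))]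
  · simp [hybrid, piecewise, hv, range_add_one]

lemma hybrid_apply_of_le {e : ℕ → V} {n : ℕ} (he : Set.InjOn e (Set.Iio n)) (x y : V → ℕ)
    {j t : ℕ} (hjt : j ≤ t) (ht : t < n) : hybrid e x y j (e t) = y (e t) := by
  refine piecewise_eq_of_notMem _ _ _ fun hmem => ?_
  obtain ⟨t', ht', htt'⟩ := mem_image.1 hmem
  have := he (by simp at ht' ⊢; omega) (Set.mem_Iio.2 ht) htt'
  simp at ht'
  omega

lemma IsKSet.hybrid {k : ℕ} {x y : V → ℕ} (hx : IsKSet k x) (hy : IsKSet k y) (e : ℕ → V)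
    (j : ℕ) : IsKSet k (hybrid e x y j) := by
  intro v
  by_cases hv : v ∈ (range j).image e
  · simpa [_root_.hybrid, piecewise_eq_of_mem _ _ _ hv] using hx v
  · simpa [_root_.hybrid, piecewise_eq_of_notMem _ _ _ hv] using hy v

variable [Fintype V]

def RLAAccepts (f : (V → ℕ) → ℝ) (c : V → ℝ) (B τ : ℝ) (e : ℕ → V) (s : ℕ → V → ℕ)
    (pos : ℕ → ℕ) (j : ℕ) : Prop :=
  cost c (s j) + c (e j) ≤ B ∧ c (e j) * τ ≤ marg f (e j) (pos j) (s j)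

structure IsRLARun (k : ℕ) (f : (V → ℕ) → ℝ) (c : V → ℝ) (B τ : ℝ) (n : ℕ) (e : ℕ → V)
    (s : ℕ → V → ℕ) (pos : ℕ → ℕ) : Prop where
  injOn : Set.InjOn e (Set.Iio n)
  surj : ∀ v, ∃ j < n, e j = v
  init : s 0 = fun _ => 0
  pos_mem : ∀ j < n, 1 ≤ pos j ∧ pos j ≤ k
  pos_greedy : ∀ j < n, ∀ l, 1 ≤ l → l ≤ k → marg f (e j) l (s j) ≤ marg f (e j) (pos j) (s j)
  step : ∀ j < n,
    (RLAAccepts f c B τ e s pos j → s (j + 1) = sqcup (s j) (singl (e j) (pos j))) ∧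
    (¬ RLAAccepts f c B τ e s pos j → s (j + 1) = s j)

namespace IsRLARun

variable {k n : ℕ} {f : (V → ℕ) → ℝ} {c : V → ℝ} {B τ : ℝ} {e : ℕ → V} {s : ℕ → V → ℕ}
  {pos : ℕ → ℕ}

lemma succ_apply_of_ne (hrun : IsRLARun k f c B τ n e s pos) {j : ℕ} (hj : j < n) {v : V}
    (hv : v ≠ e j) : s (j + 1) v = s j v := by
  by_cases hacc : RLAAccepts f c B τ e s pos j
  · rw [(hrun.step j hj).1 hacc]
    simp only [sqcup, singl, if_neg hv]
    split_ifs <;> simp_all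
  · rw [(hrun.step j hj).2 hacc]

lemma apply_eq_of_forall_ne (hrun : IsRLARun k f c B τ n e s pos) {v : V} {j₁ j₂ : ℕ}
    (h₁₂ : j₁ ≤ j₂) (h₂ : j₂ ≤ n) (hv : ∀ j, j₁ ≤ j → j < j₂ → v ≠ e j) : s j₂ v = s j₁ v := by
  induction j₂, h₁₂ using Nat.le_induction with
  | base => rfl
  | succ j hj ih =>
    rw [hrun.succ_apply_of_ne h₂ (hv j hj (lt_add_one j)),
      ih (by omega) fun j' h₁ h₂ => hv j' h₁ (by omega)]

lemma apply_eq_zero (hrun : IsRLARun k f c B τ n e s pos) {j t : ℕ} (hjt : j ≤ t)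
    (ht : t < n) : s j (e t) = 0 := by
  rw [hrun.apply_eq_of_forall_ne (Nat.zero_le j) (by omega), hrun.init]
  intro j' _ hj' h
  have := hrun.injOn (Set.mem_Iio.2 ht) (Set.mem_Iio.2 (by omega : j' < n)) h
  omega

lemma apply_eq_final (hrun : IsRLARun k f c B τ n e s pos) {j t : ℕ} (htj : t < j)
    (hj : j ≤ n) : s j (e t) = s n (e t) := by
  refine (hrun.apply_eq_of_forall_ne hj le_rfl fun j' hj' hj'n h => ?_).symm
  have := hrun.injOn (Set.mem_Iio.2 (by omega : t < n)) (Set.mem_Iio.2 hj'n) h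
  omega

lemma succ_eq_update (hrun : IsRLARun k f c B τ n e s pos) {j : ℕ} (hj : j < n)
    (hacc : RLAAccepts f c B τ e s pos j) : s (j + 1) = update (s j) (e j) (pos j) := by
  rw [(hrun.step j hj).1 hacc, sqcup_singl_eq_update (hrun.apply_eq_zero le_rfl hj)]

lemma isKSet (hrun : IsRLARun k f c B τ n e s pos) {j : ℕ} (hj : j ≤ n) : IsKSet k (s j) := by
  induction j with
  | zero => simp [hrun.init, IsKSet]
  | succ j ih =>
    by_cases hacc : RLAAccepts f c B τ e s pos j
    · rw [hrun.succ_eq_update hj hacc]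
      exact (ih (by omega)).update _ (hrun.pos_mem j hj).2
    · rw [(hrun.step j hj).2 hacc]
      exact ih (by omega)

lemma hybrid_final (hrun : IsRLARun k f c B τ n e s pos) (y : V → ℕ) :
    hybrid e (s n) y n = s n := by
  have : (range n).image e = univ := by
    ext v
    obtain ⟨j, hj, rfl⟩ := hrun.surj v
    simpa using ⟨j, hj, rfl⟩
  rw [hybrid, this, piecewise_univ]

lemma kle_hybrid (hrun : IsRLARun k f c B τ n e s pos) (y : V → ℕ) {j : ℕ} (hj : j ≤ n) :
    KLE (s j) (hybrid e (s n) y j) := by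
  intro v hv
  obtain ⟨t, ht, rfl⟩ := hrun.surj v
  have htj : t < j := by
    by_contra! h
    exact hv (hrun.apply_eq_zero h ht)
  rw [hybrid, piecewise_eq_of_mem _ _ _ (mem_image_of_mem e (mem_range.2 htj)),
    hrun.apply_eq_final htj hj]

lemma sum_range_comp (hrun : IsRLARun k f c B τ n e s pos) (g : V → ℝ) :
    ∑ j ∈ range n, g (e j) = ∑ v, g v := by
  refine sum_nbij e (fun _ _ => mem_univ _) (by simpa using hrun.injOn) ?_ fun _ _ => rfl
  intro v _
  obtain ⟨j, hj, rfl⟩ := hrun.surj v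
  exact ⟨j, by simpa using hj, rfl⟩

lemma exists_hybrid_eq_update (hrun : IsRLARun k f c B τ n e s pos) {o : V → ℕ}
    (ho : IsKSet k o) {j : ℕ} (hj : j < n) :
    ∃ w, IsKSet k w ∧ w (e j) = 0 ∧ KLE (s j) w ∧
      hybrid e (s n) o j = update w (e j) (o (e j)) ∧
      hybrid e (s n) o (j + 1) = update w (e j) (s n (e j)) := by
  refine ⟨update (hybrid e (s n) o j) (e j) 0,
    ((hrun.isKSet le_rfl).hybrid ho e j).update _ (Nat.zero_le k), update_self .., ?_, ?_, ?_⟩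
  · intro v hv
    have hvj : v ≠ e j := fun h => hv (h ▸ hrun.apply_eq_zero le_rfl hj)
    rw [update_of_ne hvj]
    exact hrun.kle_hybrid o hj.le v hv
  · rw [update_idem, ← hybrid_apply_of_le hrun.injOn (s n) o le_rfl hj, update_eq_self]
  · rw [update_idem, hybrid_succ]

theorem hybrid_step (hk : 2 ≤ k) (hsub : KSubmodular k f) (hrun : IsRLARun k f c B τ n e s pos)
    (hc : ∀ v, 0 ≤ c v) (hτ : 0 ≤ τ) {o : V → ℕ} (ho : IsKSet k o) {j : ℕ} (hj : j < n)
    (hnb : o (e j) ≠ 0 → s n (e j) = 0 →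
      ¬ (c (e j) * τ ≤ marg f (e j) (o (e j)) (s j) ∧ B < cost c (s j) + c (e j))) :
    f (hybrid e (s n) o j) - f (hybrid e (s n) o (j + 1)) ≤
      2 * (f (s (j + 1)) - f (s j)) + if o (e j) ≠ 0 then c (e j) * τ else 0 := by
  obtain ⟨w, hw, hwu, hxw, hH, hH'⟩ := hrun.exists_hybrid_eq_update ho hj
  have hx := hrun.isKSet hj.le
  have hxu : s j (e j) = 0 := hrun.apply_eq_zero le_rfl hj
  have hgreedy : ∀ l, 1 ≤ l → l ≤ k →
      f (update (s j) (e j) l) ≤ f (update (s j) (e j) (pos j)) := by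
    intro l hl hlk
    have := hrun.pos_greedy j hj l hl hlk
    rw [marg_eq_of_eq_zero hxu, marg_eq_of_eq_zero hxu] at this
    linarith
  have hsn : s n (e j) = s (j + 1) (e j) := (hrun.apply_eq_final (lt_add_one j) hj).symm
  have hcτ := mul_nonneg (hc (e j)) hτ
  rw [hH, hH', hsn]
  by_cases hacc : RLAAccepts f c B τ e s pos j
  · have hgain := hacc.2
    rw [marg_eq_of_eq_zero hxu] at hgain
    have := hsub.update_sub_update_le hk hx hw hxw hwu (hrun.pos_mem j hj).1
      (hrun.pos_mem j hj).2 hgreedy (by linarith) (ho (e j))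
    rw [hrun.succ_eq_update hj hacc, update_self]
    split_ifs <;> linarith
  · have hs : s (j + 1) = s j := (hrun.step j hj).2 hacc
    have hw0 : update w (e j) 0 = w := update_eq_self_iff.2 hwu.symm
    rw [hs, hxu, hw0, sub_self, mul_zero, zero_add]
    split_ifs with hoj
    · have hi : 1 ≤ o (e j) := Nat.one_le_iff_ne_zero.2 hoj
      have hmarg : marg f (e j) (o (e j)) (s j) ≤ c (e j) * τ := by
        by_contra! hlt
        refine hnb hoj (hsn.trans (by rw [hs, hxu])) ⟨hlt.le, ?_⟩
        by_contra! hB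
        exact hacc ⟨hB, hlt.le.trans (hrun.pos_greedy j hj _ hi (ho _))⟩
      rw [marg_eq_of_eq_zero hxu] at hmarg
      linarith [hsub.orthant_submodular hx hw hxw hwu hi (ho (e j))]
    · rw [not_not.1 hoj, hw0, sub_self]

end IsRLARun

end Run

theorem stmt7_general {V : Type*} [Fintype V] [DecidableEq V]
    (k : ℕ) (hk : 2 ≤ k)
    (f : (V → ℕ) → ℝ)
    (hsub : KSubmodular k f)
    (hf0 : f (fun _ => 0) = 0)
    (c : V → ℝ) (hc : ∀ e, 0 < c e) (B : ℝ)
    (τ : ℝ) (hτ : 0 ≤ τ)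
    (n : ℕ) (e : ℕ → V)
    (hinj : ∀ j₁ j₂, j₁ < n → j₂ < n → e j₁ = e j₂ → j₁ = j₂)
    (hsurj : ∀ v : V, ∃ j, j < n ∧ e j = v)
    (s : ℕ → (V → ℕ)) (pos : ℕ → ℕ)
    (hs0 : s 0 = fun _ => 0)
    (hposk : ∀ j < n, 1 ≤ pos j ∧ pos j ≤ k)
    (hbest : ∀ j < n, ∀ l, 1 ≤ l → l ≤ k →
      marg f (e j) l (s j) ≤ marg f (e j) (pos j) (s j))
    (hstep : ∀ j < n,
      ((cost c (s j) + c (e j) ≤ B ∧ c (e j) * τ ≤ marg f (e j) (pos j) (s j)) →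
        s (j + 1) = sqcup (s j) (singl (e j) (pos j))) ∧
      (¬ (cost c (s j) + c (e j) ≤ B ∧ c (e j) * τ ≤ marg f (e j) (pos j) (s j)) →
        s (j + 1) = s j))
    (o : V → ℕ) (ho : IsKSet k o)
    (hnb : ∀ j < n, o (e j) ≠ 0 → s n (e j) = 0 →
      ¬ (c (e j) * τ ≤ marg f (e j) (o (e j)) (s j) ∧ B < cost c (s j) + c (e j))) :
    f o ≤ 3 * f (s n) + cost c o * τ := by
  have hrun : IsRLARun k f c B τ n e s pos :=
    ⟨fun a ha b hb h => hinj a b ha hb h, hsurj, hs0, hposk, hbest, hstep⟩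
  have htel : f o - f (s n) ≤ ∑ j ∈ range n,
      (2 * (f (s (j + 1)) - f (s j)) + if o (e j) ≠ 0 then c (e j) * τ else 0) :=
    calc f o - f (s n)
        = ∑ j ∈ range n, (f (hybrid e (s n) o j) - f (hybrid e (s n) o (j + 1))) := by
          rw [sum_range_sub', hybrid_zero, hrun.hybrid_final]
      _ ≤ _ := sum_le_sum fun j hj => hrun.hybrid_step hk hsub (fun v => (hc v).le) hτ ho
          (mem_range.1 hj) (hnb j (mem_range.1 hj))
  have hextra : ∑ j ∈ range n, (if o (e j) ≠ 0 then c (e j) * τ else 0) = cost c o * τ := by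
    rw [hrun.sum_range_comp fun v => if o v ≠ 0 then c v * τ else 0, cost, sum_mul, sum_filter]
  rw [sum_add_distrib, ← mul_sum, sum_range_sub fun j => f (s j), hextra, hs0, hf0] at htel
  linarith

/-- if along an RLA run with threshold `τ ≥ 0` no element of
`supp(o) \ supp(s)` passes the threshold while being blocked by the budget,
then `f(o) ≤ 3 f(s) + c(o)·τ`. -/
theorem stmt7 {V : Type*} [Fintype V] [DecidableEq V]
    (k : ℕ) (hk : 2 ≤ k)
    (f : (V → ℕ) → ℝ)
    (hsub : KSubmodular k f)
    (hnn : ∀ x : V → ℕ, IsKSet k x → 0 ≤ f x)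
    (hf0 : f (fun _ => 0) = 0)
    (c : V → ℝ) (hc : ∀ e, 0 < c e) (B : ℝ) (hB : 0 < B)
    (τ : ℝ) (hτ : 0 ≤ τ)
    (n : ℕ) (e : ℕ → V)
    (hinj : ∀ j₁ j₂, j₁ < n → j₂ < n → e j₁ = e j₂ → j₁ = j₂)
    (hsurj : ∀ v : V, ∃ j, j < n ∧ e j = v)
    (s : ℕ → (V → ℕ)) (pos : ℕ → ℕ)
    (hs0 : s 0 = fun _ => 0)
    (hposk : ∀ j < n, 1 ≤ pos j ∧ pos j ≤ k)
    (hbest : ∀ j < n, ∀ l, 1 ≤ l → l ≤ k →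
      marg f (e j) l (s j) ≤ marg f (e j) (pos j) (s j))
    (hstep : ∀ j < n,
      ((cost c (s j) + c (e j) ≤ B ∧ c (e j) * τ ≤ marg f (e j) (pos j) (s j)) →
        s (j + 1) = sqcup (s j) (singl (e j) (pos j))) ∧
      (¬ (cost c (s j) + c (e j) ≤ B ∧ c (e j) * τ ≤ marg f (e j) (pos j) (s j)) →
        s (j + 1) = s j))
    (o : V → ℕ) (ho : IsKSet k o) (hoB : cost c o ≤ B)
    (hnb : ∀ j < n, o (e j) ≠ 0 → s n (e j) = 0 →
      ¬ (c (e j) * τ ≤ marg f (e j) (o (e j)) (s j) ∧ B < cost c (s j) + c (e j))) :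
    f o ≤ 3 * f (s n) + cost c o * τ :=
  stmt7_general k hk f hsub hf0 c hc B τ hτ n e hinj hsurj s pos hs0 hposk hbest hstep o ho hnb
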